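/- Suppose all Verblunsky coefficients α_n are real with −1 < α_n < 1 and α_n → L with L ∈ (−1, 0). Then lim_{n→∞} K_{n−1}(1,1)/φ_n(1)² = −(1+L)/(2L), where K_{n−1}(1,1) = Σ_{j=0}^{n−1} φ_j(1)². In particular, since φ_n(1) → ∞ exponentially, K_n(1,1) → ∞ and the point 1 carries no mass. -/

import Mathlib

/-!
Since `φ*_n(1) = φ_n(1)`, the recursion gives `φ_{n+1}(1)² = (1 - αₙ)/(1 + αₙ) · φ_n(1)²`.
Hence `xₙ = K_{n-1}(1,1)/φ_n(1)²` obeys the affine recursion `x_{n+1} = aₙ (xₙ + 1)` with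
`aₙ = (1 + αₙ)/(1 - αₙ) → a = (1 + L)/(1 - L) ∈ (0, 1)`. An affine recursion whose linear part
is eventually contracting converges to the fixed point of its limit, here
`a/(1 - a) = -(1 + L)/(2L)`. The same fact applied to `1/φ_n(1)²`, which satisfies the
homogeneous recursion, gives `φ_n(1) → ∞`, and `K_n(1,1) ≥ φ_n(1)²`.
-/

open Filter Finset

/-- The pair `(φ_n(1), φ*_n(1))` for real Verblunsky coefficients, via the Szegő recursion at
`z = 1`. -/
noncomputable def szegoPhiOne (α : ℕ → ℝ) : ℕ → ℝ × ℝ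
  | 0 => (1, 1)
  | n + 1 =>
      (Real.sqrt (1 - α n ^ 2))⁻¹ •
        ((szegoPhiOne α n).1 - α n * (szegoPhiOne α n).2,
         (szegoPhiOne α n).2 - α n * (szegoPhiOne α n).1)

open Topology

theorem tendsto_zero_of_le_mul_add {e δ : ℕ → ℝ} {q : ℝ} (hq₀ : 0 ≤ q) (hq₁ : q < 1)
    (he : ∀ n, 0 ≤ e n) (hrec : ∀ᶠ n in atTop, e (n + 1) ≤ q * e n + δ n)
    (hδ : Tendsto δ atTop (𝓝 0)) : Tendsto e atTop (𝓝 0) := by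
  refine tendsto_order.2 ⟨fun _ h ↦ .of_forall fun n ↦ h.trans_le (he n), fun ε hε ↦ ?_⟩
  have hη : 0 < (1 - q) * (ε / 2) := by nlinarith
  obtain ⟨N, hN⟩ := eventually_atTop.1 (hrec.and (hδ.eventually_lt_const hη))
  -- Once `δ n < (1 - q) ε/2`, the excess `e n - ε/2` contracts by the factor `q`.
  have hexcess : ∀ n ≥ N, e n - ε / 2 ≤ q ^ (n - N) * |e N - ε / 2| := by
    intro n hn
    induction n, hn using Nat.le_induction with
    | base => rw [Nat.sub_self, pow_zero, one_mul]; exact le_abs_self _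
    | succ n hn ih =>
      obtain ⟨hstep, hδn⟩ := hN n hn
      calc e (n + 1) - ε / 2 ≤ q * (e n - ε / 2) := by linarith
        _ ≤ q * (q ^ (n - N) * |e N - ε / 2|) := mul_le_mul_of_nonneg_left ih hq₀
        _ = q ^ (n + 1 - N) * |e N - ε / 2| := by rw [Nat.sub_add_comm hn, pow_succ]; ring
  have hgeom : Tendsto (fun n ↦ q ^ (n - N) * |e N - ε / 2|) atTop (𝓝 0) := by
    simpa using ((tendsto_pow_atTop_nhds_zero_of_lt_one hq₀ hq₁).comp
      (tendsto_sub_atTop_nat N)).mul_const |e N - ε / 2|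
  filter_upwards [eventually_ge_atTop N, hgeom.eventually_lt_const (half_pos hε)] with n hn hsmall
  linarith [hexcess n hn]

theorem tendsto_of_affine_recurrence {𝕜 E : Type*} [NormedField 𝕜] [NormedAddCommGroup E]
    [NormedSpace 𝕜 E] {u b : ℕ → E} {a : ℕ → 𝕜} {a₀ : 𝕜} {b₀ : E}
    (hrec : ∀ n, u (n + 1) = a n • u n + b n) (ha : Tendsto a atTop (𝓝 a₀)) (ha₀ : ‖a₀‖ < 1)
    (hb : Tendsto b atTop (𝓝 b₀)) : Tendsto u atTop (𝓝 ((1 - a₀)⁻¹ • b₀)) := by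
  set ℓ := (1 - a₀)⁻¹ • b₀
  have hfix : a₀ • ℓ + b₀ - ℓ = 0 := by
    have h1a₀ : 1 - a₀ ≠ 0 := fun h ↦ by
      rw [← eq_of_sub_eq_zero h, norm_one] at ha₀
      exact ha₀.false
    have h := smul_inv_smul₀ h1a₀ b₀
    rw [sub_smul, one_smul] at h
    rw [← h]
    abel
  have hδ : Tendsto (fun n ↦ ‖a n • ℓ + b n - ℓ‖) atTop (𝓝 0) := by
    simpa [hfix] using (((ha.smul_const ℓ).add hb).sub_const ℓ).norm
  obtain ⟨q, hq₀, hq₁⟩ := exists_between ha₀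
  have hq : ∀ᶠ n in atTop, ‖a n‖ ≤ q := (ha.norm.eventually_lt_const hq₀).mono fun _ ↦ le_of_lt
  rw [tendsto_iff_norm_sub_tendsto_zero]
  refine tendsto_zero_of_le_mul_add ((norm_nonneg _).trans hq₀.le) hq₁ (fun _ ↦ norm_nonneg _) ?_ hδ
  filter_upwards [hq] with n hn
  calc ‖u (n + 1) - ℓ‖ = ‖a n • (u n - ℓ) + (a n • ℓ + b n - ℓ)‖ := by
        rw [hrec, smul_sub]; congr 1; abel
    _ ≤ ‖a n‖ * ‖u n - ℓ‖ + ‖a n • ℓ + b n - ℓ‖ := (norm_add_le _ _).trans_eq (by rw [norm_smul])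
    _ ≤ q * ‖u n - ℓ‖ + ‖a n • ℓ + b n - ℓ‖ := by gcongr

section GrowthByRatio

variable {P a : ℕ → ℝ} {a₀ : ℝ}

theorem ne_zero_of_eq_mul_succ (hP : ∀ n, 0 < P n) (hrec : ∀ n, P n = a n * P (n + 1)) (n : ℕ) :
    a n ≠ 0 :=
  left_ne_zero_of_mul (hrec n ▸ (hP n).ne')

theorem tendsto_sum_range_div_of_eq_mul_succ (hP : ∀ n, 0 < P n)
    (hrec : ∀ n, P n = a n * P (n + 1)) (ha : Tendsto a atTop (𝓝 a₀)) (ha₀ : |a₀| < 1) :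
    Tendsto (fun n ↦ (∑ j ∈ range n, P j) / P n) atTop (𝓝 ((1 - a₀)⁻¹ * a₀)) := by
  refine tendsto_of_affine_recurrence (fun n ↦ ?_) ha ha₀ ha
  rw [sum_range_succ, smul_eq_mul, hrec n]
  field_simp [(hP (n + 1)).ne', ne_zero_of_eq_mul_succ hP hrec n]

theorem tendsto_atTop_of_eq_mul_succ (hP : ∀ n, 0 < P n)
    (hrec : ∀ n, P n = a n * P (n + 1)) (ha : Tendsto a atTop (𝓝 a₀)) (ha₀ : |a₀| < 1) :
    Tendsto P atTop atTop := by
  have hP_inv : Tendsto (fun n ↦ (P n)⁻¹) atTop (𝓝 0) := by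
    simpa using tendsto_of_affine_recurrence (u := fun n ↦ (P n)⁻¹) (b := fun _ ↦ 0)
      (fun n ↦ by rw [smul_eq_mul, add_zero, hrec n, mul_inv,
        mul_inv_cancel_left₀ (ne_zero_of_eq_mul_succ hP hrec n)])
      ha ha₀ tendsto_const_nhds
  exact (tendsto_nhdsWithin_iff.2 ⟨hP_inv, .of_forall fun n ↦ inv_pos.2 (hP n)⟩)
    |>.inv_tendsto_nhdsGT_zero.congr fun n ↦ inv_inv (P n)

end GrowthByRatio

theorem szegoPhiOne_snd_eq_fst (α : ℕ → ℝ) (n : ℕ) :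
    (szegoPhiOne α n).2 = (szegoPhiOne α n).1 := by
  induction n with
  | zero => simp [szegoPhiOne]
  | succ n ih => simp [szegoPhiOne, ih]

theorem szegoPhiOne_fst_succ (α : ℕ → ℝ) (n : ℕ) :
    (szegoPhiOne α (n + 1)).1 = (1 - α n) / √(1 - α n ^ 2) * (szegoPhiOne α n).1 := by
  simp only [szegoPhiOne, Prod.smul_fst, smul_eq_mul, szegoPhiOne_snd_eq_fst]
  ring

theorem szegoPhiOne_fst_pos {α : ℕ → ℝ} (hα : ∀ n, |α n| < 1) (n : ℕ) :
    0 < (szegoPhiOne α n).1 := by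
  induction n with
  | zero => simp [szegoPhiOne]
  | succ n ih =>
    obtain ⟨hα_gt, hα_lt⟩ := abs_lt.1 (hα n)
    rw [szegoPhiOne_fst_succ]
    exact mul_pos (div_pos (by linarith) (Real.sqrt_pos.2 (by nlinarith))) ih

theorem szegoPhiOne_fst_sq_eq_mul_succ {α : ℕ → ℝ} {n : ℕ} (hα : |α n| < 1) :
    (szegoPhiOne α n).1 ^ 2 = (1 + α n) / (1 - α n) * (szegoPhiOne α (n + 1)).1 ^ 2 := by
  obtain ⟨hα_gt, hα_lt⟩ := abs_lt.1 hα
  rw [szegoPhiOne_fst_succ, mul_pow, div_pow, Real.sq_sqrt (by nlinarith),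
    show 1 - α n ^ 2 = (1 - α n) * (1 + α n) by ring]
  field_simp [show 1 - α n ≠ 0 by linarith, show 1 + α n ≠ 0 by linarith]

/-- For real Verblunsky coefficients with `αₙ → L ∈ (-1,0)`:
`K_{n-1}(1,1)/φ_n(1)² → -(1+L)/(2L)`, and `K_n(1,1) → ∞` (the point `1` carries no mass). -/
theorem kernel_over_phi_sq_limit
    (α : ℕ → ℝ) (hα : ∀ n, |α n| < 1)
    (L : ℝ) (hL : L ∈ Set.Ioo (-1 : ℝ) 0) (hlim : Tendsto α atTop (nhds L)) :
    Tendsto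
      (fun n => (∑ j ∈ Finset.range n, (szegoPhiOne α j).1 ^ 2) / (szegoPhiOne α n).1 ^ 2)
      atTop (nhds (-(1 + L) / (2 * L))) ∧
    Tendsto (fun n => ∑ j ∈ Finset.range (n + 1), (szegoPhiOne α j).1 ^ 2) atTop atTop := by
  obtain ⟨hL_gt, hL_lt⟩ := hL
  have hP (n : ℕ) : 0 < (szegoPhiOne α n).1 ^ 2 := pow_pos (szegoPhiOne_fst_pos hα n) 2
  have hrec (n : ℕ) := szegoPhiOne_fst_sq_eq_mul_succ (hα n)
  have ha : Tendsto (fun n ↦ (1 + α n) / (1 - α n)) atTop (𝓝 ((1 + L) / (1 - L))) :=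
    (tendsto_const_nhds.add hlim).div (tendsto_const_nhds.sub hlim) (by linarith)
  have ha₀ : |(1 + L) / (1 - L)| < 1 := by
    rw [abs_of_pos (div_pos (by linarith) (by linarith)), div_lt_one (by linarith)]
    linarith
  refine ⟨?_, tendsto_atTop_mono (fun n ↦ single_le_sum (fun j _ ↦ (hP j).le)
    (self_mem_range_succ n)) (tendsto_atTop_of_eq_mul_succ hP hrec ha ha₀)⟩
  convert tendsto_sum_range_div_of_eq_mul_succ hP hrec ha ha₀ using 2
  field_simp [show 1 - L ≠ 0 by linarith]
  ring
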